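/- Fix α ∈ (0,1), ρ ∈ (-1,1), and define g_α(x) = Φ̄⁻¹(Φ̄(x)/α). Then the region R_α^{+,1} := {(u₁,u₂) : u₁ ≥ Φ̄⁻¹(α/2), -g_α(u₁)(1+ρ) + ρu₁ ≤ u₂ ≤ g_α(u₁)(1-ρ) + ρu₁} is closed under both diagonal translations: if (u₁,u₂) ∈ R_α^{+,1} and r > 0, then (u₁+r, u₂+r) ∈ R_α^{+,1} and (u₁+r, u₂-r) ∈ R_α^{+,1}. -/

import Mathlib

open MeasureTheory Real Set

/-- Standard normal density. -/
noncomputable def phi (x : ℝ) : ℝ := (Real.sqrt (2 * Real.pi))⁻¹ * Real.exp (-x ^ 2 / 2)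

/-- Upper tail of the standard normal distribution. -/
noncomputable def Phibar (x : ℝ) : ℝ := ∫ t in Set.Ioi x, phi t

/-- Inverse of the upper tail function `Φ̄ : ℝ → (0,1)`. -/
noncomputable def PhibarInv : ℝ → ℝ := Function.invFun Phibar

/-- The function `h_α`. -/
noncomputable def halpha (α ℓ : ℝ) : ℝ := PhibarInv (α * Phibar ℓ) - ℓ

/-- The function `g_α(u) := Φ̄⁻¹(Φ̄(u)/α)`. -/
noncomputable def galpha (α u : ℝ) : ℝ := PhibarInv (Phibar u / α)

/-- The region `R_α^{+,1}` of the two-dimensional rejection region. -/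
def RegionP1 (α ρ : ℝ) : Set (ℝ × ℝ) :=
  {u : ℝ × ℝ | PhibarInv (α / 2) ≤ u.1 ∧
    -galpha α u.1 * (1 + ρ) + ρ * u.1 ≤ u.2 ∧ u.2 ≤ galpha α u.1 * (1 - ρ) + ρ * u.1}

/-!
Because `Φ̄(g_α(u)) = Φ̄(u)/α` and `g_α(u) ≤ u`, the super-additivity `g_α(u) + r ≤ g_α(u + r)`
reduces to the tail ratio `x ↦ Φ̄(x + r)/Φ̄(x)` being antitone, i.e. to log-concavity of `Φ̄`.
This holds because the hazard rate `φ/Φ̄` is monotone, which is the Mills inequality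
`x Φ̄(x) ≤ φ(x)`. Since `1 ∓ ρ > 0`, super-additivity makes the upper bound on `u₂` rise and the
lower bound fall by at least `r` when `u₁` grows by `r`, so `u₂ ± r` stays admissible.
-/

open Filter Topology ProbabilityTheory

lemma phi_eq_gaussianPDFReal : phi = gaussianPDFReal 0 1 := by
  funext x
  simp [phi, gaussianPDFReal]

lemma phi_pos (x : ℝ) : 0 < phi x := by
  rw [phi_eq_gaussianPDFReal]
  exact gaussianPDFReal_pos _ _ _ one_ne_zero

lemma integrable_phi : Integrable phi := by
  rw [phi_eq_gaussianPDFReal]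
  exact integrable_gaussianPDFReal _ _

lemma integral_phi : ∫ x, phi x = 1 := by
  rw [phi_eq_gaussianPDFReal]
  exact integral_gaussianPDFReal_eq_one _ one_ne_zero

lemma continuous_phi : Continuous phi := by
  unfold phi
  fun_prop

lemma hasDerivAt_phi (x : ℝ) : HasDerivAt phi (-(x * phi x)) x := by
  have h : HasDerivAt (fun t : ℝ => -t ^ 2 / 2) (-x) x :=
    (((hasDerivAt_pow 2 x).neg).div_const 2).congr_deriv (by push_cast; ring)
  exact (h.exp.const_mul (Real.sqrt (2 * Real.pi))⁻¹).congr_deriv (by simp only [phi]; ring)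

lemma integrable_mul_phi : Integrable fun t => t * phi t := by
  convert (integrable_mul_exp_neg_mul_sq (by norm_num : (0 : ℝ) < 1 / 2)).const_mul
    (Real.sqrt (2 * Real.pi))⁻¹ using 2 with t
  simp only [phi]
  ring_nf

lemma tendsto_phi_atTop : Tendsto phi atTop (𝓝 0) :=
  tendsto_zero_of_hasDerivAt_of_integrableOn_Ioi (a := 0) (fun x _ => hasDerivAt_phi x)
    integrable_mul_phi.neg.integrableOn integrable_phi.integrableOn

lemma integral_Ioi_mul_phi (x : ℝ) : ∫ t in Ioi x, t * phi t = phi x := by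
  have h := integral_Ioi_of_hasDerivAt_of_tendsto' (a := x) (f := fun t => -phi t)
    (fun t _ => (hasDerivAt_phi t).neg.congr_deriv (neg_neg _))
    integrable_mul_phi.integrableOn tendsto_phi_atTop.neg
  simpa using h

lemma Phibar_sub_Phibar (a b : ℝ) : Phibar a - Phibar b = ∫ t in a..b, phi t :=
  intervalIntegral.integral_Ioi_sub_Ioi' integrable_phi.integrableOn integrable_phi.integrableOn

lemma Phibar_pos (x : ℝ) : 0 < Phibar x := by
  rw [Phibar, setIntegral_pos_iff_support_of_nonneg_ae
    (ae_of_all _ fun t => (phi_pos t).le) integrable_phi.integrableOn]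
  simp [Function.support, (phi_pos _).ne']

lemma strictAnti_Phibar : StrictAnti Phibar := fun a b hab => by
  have h := intervalIntegral.intervalIntegral_pos_of_pos_on
    (continuous_phi.intervalIntegrable a b) (fun t _ => phi_pos t) hab
  linarith [Phibar_sub_Phibar a b]

lemma hasDerivAt_Phibar (x : ℝ) : HasDerivAt Phibar (-phi x) x := by
  have h := (intervalIntegral.integral_hasDerivAt_right (continuous_phi.intervalIntegrable 0 x)
    (continuous_phi.stronglyMeasurableAtFilter _ _) continuous_phi.continuousAt).const_sub
    (Phibar 0)
  refine h.congr_of_eventuallyEq (Eventually.of_forall fun y => ?_)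
  linarith [Phibar_sub_Phibar 0 y]

lemma continuous_Phibar : Continuous Phibar :=
  continuous_iff_continuousAt.2 fun x => (hasDerivAt_Phibar x).continuousAt

lemma tendsto_Phibar_atTop : Tendsto Phibar atTop (𝓝 0) := by
  have h := (intervalIntegral_tendsto_integral_Ioi 0 integrable_phi.integrableOn
    tendsto_id).const_sub (Phibar 0)
  rw [← Phibar, sub_self] at h
  exact h.congr fun x => by simp [← Phibar_sub_Phibar 0 x]

lemma tendsto_Phibar_atBot : Tendsto Phibar atBot (𝓝 1) := by
  have h := (intervalIntegral_tendsto_integral_Iic 0 integrable_phi.integrableOn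
    tendsto_id).const_add (Phibar 0)
  have hsplit : (∫ t in Iic 0, phi t) + Phibar 0 = 1 := by
    rw [Phibar, intervalIntegral.integral_Iic_add_Ioi integrable_phi.integrableOn
      integrable_phi.integrableOn, integral_phi]
  rw [add_comm, hsplit] at h
  exact h.congr fun x => by simp [← Phibar_sub_Phibar x 0]

lemma Phibar_surjOn : SurjOn Phibar univ (Ioo 0 1) := by
  intro y hy
  obtain ⟨b, hb⟩ := (tendsto_Phibar_atTop.eventually (eventually_lt_nhds hy.1)).exists
  obtain ⟨a, ha⟩ := (tendsto_Phibar_atBot.eventually (eventually_gt_nhds hy.2)).exists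
  have hab : a ≤ b := strictAnti_Phibar.le_iff_ge.1 (by linarith)
  obtain ⟨x, -, hx⟩ := intermediate_value_Icc' hab continuous_Phibar.continuousOn ⟨hb.le, ha.le⟩
  exact ⟨x, trivial, hx⟩

lemma Phibar_PhibarInv {y : ℝ} (hy : y ∈ Ioo 0 1) : Phibar (PhibarInv y) = y := by
  obtain ⟨x, -, hx⟩ := Phibar_surjOn hy
  exact Function.invFun_eq ⟨x, hx⟩

lemma mul_Phibar_le_phi (x : ℝ) : x * Phibar x ≤ phi x := by
  rw [← integral_Ioi_mul_phi, Phibar, ← integral_const_mul]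
  refine setIntegral_mono_on (integrable_phi.const_mul x).integrableOn
    integrable_mul_phi.integrableOn measurableSet_Ioi fun t ht => ?_
  exact mul_le_mul_of_nonneg_right (le_of_lt ht) (phi_pos t).le

lemma monotone_phi_div_Phibar : Monotone fun x => phi x / Phibar x := by
  have hderiv (x : ℝ) : HasDerivAt (fun x => phi x / Phibar x)
      ((-(x * phi x) * Phibar x - phi x * -phi x) / Phibar x ^ 2) x :=
    (hasDerivAt_phi x).div (hasDerivAt_Phibar x) (Phibar_pos x).ne'
  refine monotone_of_deriv_nonneg (fun x => (hderiv x).differentiableAt) fun x => ?_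
  rw [(hderiv x).deriv]
  have hmills := mul_le_mul_of_nonneg_left (mul_Phibar_le_phi x) (phi_pos x).le
  exact div_nonneg (by linarith) (sq_nonneg _)

lemma antitone_log_Phibar_add_sub_log_Phibar {r : ℝ} (hr : 0 ≤ r) :
    Antitone fun x => Real.log (Phibar (x + r)) - Real.log (Phibar x) := by
  have hderiv (x : ℝ) : HasDerivAt (fun x => Real.log (Phibar (x + r)) - Real.log (Phibar x))
      (-phi (x + r) / Phibar (x + r) - -phi x / Phibar x) x :=
    (((hasDerivAt_Phibar (x + r)).comp_add_const x r).log (Phibar_pos _).ne').sub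
      ((hasDerivAt_Phibar x).log (Phibar_pos x).ne')
  refine antitone_of_deriv_nonpos (fun x => (hderiv x).differentiableAt) fun x => ?_
  rw [(hderiv x).deriv, neg_div, neg_div]
  linarith [monotone_phi_div_Phibar (le_add_of_nonneg_right hr : x ≤ x + r)]

lemma Phibar_add_mul_Phibar_le {x y r : ℝ} (hxy : x ≤ y) (hr : 0 ≤ r) :
    Phibar (y + r) * Phibar x ≤ Phibar (x + r) * Phibar y := by
  have hlog := antitone_log_Phibar_add_sub_log_Phibar hr hxy
  rw [← Real.log_le_log_iff (mul_pos (Phibar_pos _) (Phibar_pos _))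
    (mul_pos (Phibar_pos _) (Phibar_pos _)), Real.log_mul (Phibar_pos _).ne' (Phibar_pos _).ne',
    Real.log_mul (Phibar_pos _).ne' (Phibar_pos _).ne']
  linarith

lemma Phibar_galpha {α u : ℝ} (hα : 0 < α) (hu : Phibar u < α) :
    Phibar (galpha α u) = Phibar u / α :=
  Phibar_PhibarInv ⟨div_pos (Phibar_pos u) hα, (div_lt_one hα).2 hu⟩

lemma galpha_le_self {α u : ℝ} (hα : 0 < α) (hα1 : α ≤ 1) (hu : Phibar u < α) :
    galpha α u ≤ u := by
  rw [← strictAnti_Phibar.le_iff_ge, Phibar_galpha hα hu]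
  exact le_div_self (Phibar_pos u).le hα hα1

lemma galpha_add_le_galpha_add {α u r : ℝ} (hα : 0 < α) (hα1 : α ≤ 1) (hu : Phibar u < α)
    (hr : 0 ≤ r) : galpha α u + r ≤ galpha α (u + r) := by
  have hur : Phibar (u + r) < α :=
    (strictAnti_Phibar.antitone (le_add_of_nonneg_right hr)).trans_lt hu
  have hprod := Phibar_add_mul_Phibar_le (galpha_le_self hα hα1 hu) hr
  rw [Phibar_galpha hα hu, mul_div_assoc', div_le_iff₀ hα, mul_right_comm _ _ α] at hprod
  rw [← strictAnti_Phibar.le_iff_ge, Phibar_galpha hα hur, div_le_iff₀ hα]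
  exact le_of_mul_le_mul_right hprod (Phibar_pos u)

/-- `R_α^{+,1}` is closed under both diagonal translations `(r, r)` and `(r, -r)` for `r > 0`. -/
theorem regionP1_diagonal_stable {α ρ : ℝ} (hα : α ∈ Set.Ioo (0 : ℝ) 1)
    (hρ : ρ ∈ Set.Ioo (-1 : ℝ) 1) {u : ℝ × ℝ} (hu : u ∈ RegionP1 α ρ) {r : ℝ} (hr : 0 < r) :
    (u.1 + r, u.2 + r) ∈ RegionP1 α ρ ∧ (u.1 + r, u.2 - r) ∈ RegionP1 α ρ := by
  obtain ⟨hα0, hα1⟩ := hα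
  obtain ⟨hthreshold, hlower, hupper⟩ := hu
  have hu1 : Phibar u.1 < α := by
    have h := strictAnti_Phibar.antitone hthreshold
    rw [Phibar_PhibarInv ⟨by linarith, by linarith⟩] at h
    linarith
  have hsuper := galpha_add_le_galpha_add hα0 hα1.le hu1 hr.le
  have hupper_rises : galpha α u.1 * (1 - ρ) + ρ * u.1 + r ≤
      galpha α (u.1 + r) * (1 - ρ) + ρ * (u.1 + r) := by
    linarith [mul_le_mul_of_nonneg_right hsuper (by linarith [hρ.2] : (0 : ℝ) ≤ 1 - ρ)]
  have hlower_falls : -galpha α (u.1 + r) * (1 + ρ) + ρ * (u.1 + r) ≤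
      -galpha α u.1 * (1 + ρ) + ρ * u.1 - r := by
    linarith [mul_le_mul_of_nonneg_right hsuper (by linarith [hρ.1] : (0 : ℝ) ≤ 1 + ρ)]
  have hthreshold' : PhibarInv (α / 2) ≤ u.1 + r := by linarith
  exact ⟨⟨hthreshold', by dsimp only; linarith, by dsimp only; linarith⟩,
    ⟨hthreshold', by dsimp only; linarith, by dsimp only; linarith⟩⟩
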